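/- arXiv:1407.0574 — 3 statements merged into one kernel-verified Lean document; each statement's English description precedes it below -/
import Mathlib

section
/- Let ε ∈ {0,1}, n ∈ ℕ, k ∈ ℕ, and set z₀ = 1 - ε - 2k. With h(z) = ( ∏_{j=0}^{n-1} (2 - z + ε + 2j) ) · Γ((z+ε-1)/2) / ( 2ⁿ · Γ((z+ε)/2 + n) ), the function z ↦ (z - z₀)·h(z) converges, as z → z₀ with z ≠ z₀, to a nonzero complex limit; i.e. h has a first-order pole with nonzero residue at z₀. -/
open Filter Topology Complex

/-- Residue of Γ at `-k`: `(w + k) * Γ w → (-1)^k / k!` as `w → -k`, `w ≠ -k`. -/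
lemma gamma_residue (k : ℕ) :
    Tendsto (fun w : ℂ => (w + (k : ℂ)) * Complex.Gamma w)
      (𝓝[≠] (-(k : ℂ))) (𝓝 ((-1) ^ k / (k.factorial : ℂ))) := by
  induction k with
  | zero => simpa using Complex.tendsto_self_mul_Gamma_nhds_zero
  | succ k ih =>
    have hshift : Tendsto (fun w : ℂ => w + 1) (𝓝[≠] (-((k + 1 : ℕ) : ℂ))) (𝓝[≠] (-(k : ℂ))) := by
      have hc : Tendsto (fun w : ℂ => w + 1) (𝓝 (-((k + 1 : ℕ) : ℂ))) (𝓝 (-(k : ℂ))) := by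
        have he : -((k + 1 : ℕ) : ℂ) + 1 = -(k : ℂ) := by push_cast; ring
        simpa [he] using (continuous_add_right (1 : ℂ)).tendsto (-((k + 1 : ℕ) : ℂ))
      rw [tendsto_nhdsWithin_iff]
      refine ⟨hc.mono_left nhdsWithin_le_nhds, ?_⟩
      filter_upwards [self_mem_nhdsWithin] with w hw
      simp only [Set.mem_compl_iff, Set.mem_singleton_iff] at hw ⊢
      intro h
      apply hw
      have hwv : w = -(k : ℂ) - 1 := by linear_combination h
      rw [hwv]; push_cast; ring
    have h1 : Tendsto (fun w : ℂ => ((w + 1) + (k : ℂ)) * Complex.Gamma (w + 1))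
        (𝓝[≠] (-((k + 1 : ℕ) : ℂ))) (𝓝 ((-1) ^ k / (k.factorial : ℂ))) :=
      ih.comp hshift
    have h2 : Tendsto (fun w : ℂ => w⁻¹) (𝓝[≠] (-((k + 1 : ℕ) : ℂ)))
        (𝓝 ((-((k + 1 : ℕ) : ℂ))⁻¹)) := by
      refine (Filter.Tendsto.inv₀ tendsto_id ?_).mono_left nhdsWithin_le_nhds
      simp only [neg_ne_zero, Ne, Nat.cast_eq_zero]
      exact Nat.succ_ne_zero k
    have h3 := h1.mul h2
    have hval : (-1) ^ k / (k.factorial : ℂ) * (-((k + 1 : ℕ) : ℂ))⁻¹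
        = (-1) ^ (k + 1) / ((k + 1).factorial : ℂ) := by
      have hk : (k.factorial : ℂ) ≠ 0 := Nat.cast_ne_zero.mpr k.factorial_ne_zero
      have hk1 : ((k + 1 : ℕ) : ℂ) ≠ 0 := Nat.cast_ne_zero.mpr (Nat.succ_ne_zero k)
      rw [Nat.factorial_succ, pow_succ, ← div_eq_mul_inv, div_div]
      push_cast at hk1 ⊢
      rw [div_eq_div_iff (mul_ne_zero hk (neg_ne_zero.mpr hk1)) (mul_ne_zero hk1 hk)]
      ring
    rw [hval] at h3
    have h0 : ∀ᶠ w : ℂ in 𝓝[≠] (-((k + 1 : ℕ) : ℂ)), w ≠ 0 := by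
      have hne : -((k + 1 : ℕ) : ℂ) ≠ 0 :=
        neg_ne_zero.mpr (Nat.cast_ne_zero.mpr (Nat.succ_ne_zero k))
      exact (eventually_ne_nhds hne).filter_mono nhdsWithin_le_nhds
    refine h3.congr' ?_
    filter_upwards [h0] with w hw0
    have hΓ : Complex.Gamma (w + 1) = w * Complex.Gamma w := Complex.Gamma_add_one w hw0
    rw [hΓ]
    push_cast
    field_simp
    ring

/-- The scalar `h(z)` of the standard intertwining operator on the K-type of weight
`ν = ε + 2n` has a first-order pole with nonzero residue at each point `z₀ = 1-ε-2k`: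
`(z-z₀)·h(z)` tends to a nonzero limit as `z → z₀`, `z ≠ z₀`. -/
theorem stmt_6 (ε : ℕ) (hε : ε ≤ 1) (n k : ℕ) :
    ∃ L : ℂ, L ≠ 0 ∧
      Filter.Tendsto (fun z : ℂ =>
          (z - (1 - (ε : ℂ) - 2 * (k : ℂ))) *
            ((∏ j ∈ Finset.range n, (2 - z + (ε : ℂ) + 2 * (j : ℂ))) *
              Complex.Gamma ((z + (ε : ℂ) - 1) / 2) /
              (2 ^ n * Complex.Gamma ((z + (ε : ℂ)) / 2 + (n : ℂ)))))
        (nhdsWithin (1 - (ε : ℂ) - 2 * (k : ℂ)) {(1 - (ε : ℂ) - 2 * (k : ℂ))}ᶜ)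
        (nhds L) := by
  set z₀ : ℂ := 1 - (ε : ℂ) - 2 * (k : ℂ) with hz₀
  -- the regular Gamma argument at z₀
  have hs₀ : (z₀ + (ε : ℂ)) / 2 + (n : ℂ) = (((2 * (n : ℝ) - 2 * k + 1) / 2 : ℝ) : ℂ) := by
    rw [hz₀]; push_cast; ring
  have hs_ne : ∀ m : ℕ, (z₀ + (ε : ℂ)) / 2 + (n : ℂ) ≠ -(m : ℂ) := by
    intro m h
    rw [hs₀] at h
    have h' : ((2 * (n : ℝ) - 2 * k + 1) / 2 : ℝ) = -(m : ℝ) := by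
      exact_mod_cast h
    have h2 : (2 * (n : ℝ) - 2 * k + 1) = -(2 * m) := by linarith
    have h3 : (2 * (n : ℝ) + 2 * m + 1) = 2 * k := by linarith
    have h4 : (2 * n + 2 * m + 1 : ℤ) = 2 * k := by exact_mod_cast h3
    omega
  have hΓD : Complex.Gamma ((z₀ + (ε : ℂ)) / 2 + (n : ℂ)) ≠ 0 := by
    apply Complex.Gamma_ne_zero hs_ne
  -- continuity of numerator product and denominator
  have hcontP : ContinuousAt (fun z : ℂ => ∏ j ∈ Finset.range n, (2 - z + (ε : ℂ) + 2 * (j : ℂ))) z₀ := by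
    apply Continuous.continuousAt
    apply continuous_finset_prod
    intro j _
    fun_prop
  have hcontD : ContinuousAt (fun z : ℂ => (2 : ℂ) ^ n * Complex.Gamma ((z + (ε : ℂ)) / 2 + (n : ℂ))) z₀ := by
    apply ContinuousAt.mul continuousAt_const
    have hΓ : ContinuousAt Complex.Gamma ((z₀ + (ε : ℂ)) / 2 + (n : ℂ)) :=
      (Complex.differentiableAt_Gamma _ hs_ne).continuousAt
    have hf : ContinuousAt (fun z : ℂ => (z + (ε : ℂ)) / 2 + (n : ℂ)) z₀ := by fun_prop
    exact ContinuousAt.comp hΓ hf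
  have hDne : (2 : ℂ) ^ n * Complex.Gamma ((z₀ + (ε : ℂ)) / 2 + (n : ℂ)) ≠ 0 :=
    mul_ne_zero (pow_ne_zero n two_ne_zero) hΓD
  have hPne : (∏ j ∈ Finset.range n, (2 - z₀ + (ε : ℂ) + 2 * (j : ℂ))) ≠ 0 := by
    rw [Finset.prod_ne_zero_iff]
    intro j _
    have : 2 - z₀ + (ε : ℂ) + 2 * (j : ℂ) = ((1 + 2 * ε + 2 * k + 2 * j : ℕ) : ℂ) := by
      rw [hz₀]; push_cast; ring
    rw [this]
    exact Nat.cast_ne_zero.mpr (by omega)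
  -- factor A : the continuous part
  set A : ℂ := (∏ j ∈ Finset.range n, (2 - z₀ + (ε : ℂ) + 2 * (j : ℂ))) /
      ((2 : ℂ) ^ n * Complex.Gamma ((z₀ + (ε : ℂ)) / 2 + (n : ℂ))) with hA
  have hAne : A ≠ 0 := div_ne_zero hPne hDne
  have htendA : Filter.Tendsto (fun z : ℂ =>
      (∏ j ∈ Finset.range n, (2 - z + (ε : ℂ) + 2 * (j : ℂ))) /
        ((2 : ℂ) ^ n * Complex.Gamma ((z + (ε : ℂ)) / 2 + (n : ℂ))))
      (nhdsWithin z₀ {z₀}ᶜ) (nhds A) :=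
    ((hcontP.div hcontD hDne).tendsto).mono_left nhdsWithin_le_nhds
  -- factor B : the pole part
  have hw : Filter.Tendsto (fun z : ℂ => (z + (ε : ℂ) - 1) / 2)
      (nhdsWithin z₀ {z₀}ᶜ) (nhdsWithin (-(k : ℂ)) {(-(k : ℂ))}ᶜ) := by
    rw [tendsto_nhdsWithin_iff]
    constructor
    · have hc : ContinuousAt (fun z : ℂ => (z + (ε : ℂ) - 1) / 2) z₀ := by fun_prop
      have hv : (z₀ + (ε : ℂ) - 1) / 2 = -(k : ℂ) := by rw [hz₀]; ring
      exact (hv ▸ hc.tendsto).mono_left nhdsWithin_le_nhds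
    · filter_upwards [self_mem_nhdsWithin] with z hz
      simp only [Set.mem_compl_iff, Set.mem_singleton_iff] at hz ⊢
      intro h
      apply hz
      rw [hz₀]
      linear_combination 2 * h
  have htendB : Filter.Tendsto (fun z : ℂ =>
      2 * (((z + (ε : ℂ) - 1) / 2 + (k : ℂ)) * Complex.Gamma ((z + (ε : ℂ) - 1) / 2)))
      (nhdsWithin z₀ {z₀}ᶜ) (nhds (2 * ((-1) ^ k / (k.factorial : ℂ)))) :=
    ((gamma_residue k).comp hw).const_mul 2
  refine ⟨A * (2 * ((-1) ^ k / (k.factorial : ℂ))), ?_, ?_⟩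
  · exact mul_ne_zero hAne (mul_ne_zero two_ne_zero
      (div_ne_zero (pow_ne_zero k (neg_ne_zero.mpr one_ne_zero))
        (Nat.cast_ne_zero.mpr k.factorial_ne_zero)))
  · refine (htendA.mul htendB).congr' ?_
    filter_upwards with z
    have h2 : 2 * ((z + (ε : ℂ) - 1) / 2 + (k : ℂ)) = z - z₀ := by rw [hz₀]; ring
    ring
end

section
/- Let n ≥ 2 and let σ be the permutation of {1,…,n} determined by σ(j) = 2j-1 for 1 ≤ j ≤ ⌈n/2⌉ and σ(n+1-j) = 2j for 1 ≤ j ≤ ⌊n/2⌋ (equivalently σ⁻¹ sends 1↦1, 2↦n, 3↦2, 4↦n-1, …). Then the number of inversions of σ, i.e. the cardinality of { (i,j) : 1 ≤ i < j ≤ n and σ(i) > σ(j) }, equals n(n-2)/4 if n is even and (n-1)²/4 if n is odd. -/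
/-- Auxiliary: closed form for `∑_{j<n} (2j ∸ n)`. -/
lemma stmt_7_gsum (n : ℕ) : (∑ j ∈ Finset.range n, (2 * j - n)) =
    if Even n then n * (n - 2) / 4 else (n - 1) ^ 2 / 4 := by
  induction n using Nat.twoStepInduction with
  | zero => simp
  | one => simp
  | more n ih _ =>
    have h1 : (∑ j ∈ Finset.range (n + 2), (2 * j - (n + 2))) =
        (∑ j ∈ Finset.range n, (2 * j - n)) + n := by
      rw [Finset.sum_range_succ' (fun j => 2 * j - (n + 2)) (n + 1)]
      have he : ∀ j, 2 * (j + 1) - (n + 2) = 2 * j - n := fun j => by omega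
      simp only [he]
      rw [Finset.sum_range_succ]
      omega
    rw [h1, ih]
    by_cases he : Even n
    · have h2 : Even (n + 2) := by simpa [Nat.even_add] using he
      rw [if_pos he, if_pos h2]
      obtain ⟨k, hk⟩ := he
      subst hk
      rcases k with _ | m
      · simp
      · have a1 : (m + 1 + (m + 1)) * ((m + 1 + (m + 1)) - 2) = 4 * ((m + 1) * m) := by
          have : (m + 1 + (m + 1)) - 2 = 2 * m := by omega
          rw [this]; ring
        have a2 : (m + 1 + (m + 1) + 2) * ((m + 1 + (m + 1) + 2) - 2) =
            4 * ((m + 1) * (m + 1) + (m + 1)) := by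
          have : (m + 1 + (m + 1) + 2) - 2 = 2 * (m + 1) := by omega
          rw [this]; ring
        rw [a1, a2, Nat.mul_div_cancel_left _ (by norm_num : (0:ℕ) < 4),
          Nat.mul_div_cancel_left _ (by norm_num : (0:ℕ) < 4)]
        ring
    · have h2 : ¬ Even (n + 2) := by simpa [Nat.even_add] using he
      rw [if_neg he, if_neg h2]
      obtain ⟨k, hk⟩ := Nat.not_even_iff_odd.mp he
      subst hk
      have a1 : (2 * k + 1 - 1) ^ 2 = 4 * (k ^ 2) := by
        have : 2 * k + 1 - 1 = 2 * k := by omega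
        rw [this]; ring
      have a2 : (2 * k + 1 + 2 - 1) ^ 2 = 4 * ((k + 1) ^ 2) := by
        have : 2 * k + 1 + 2 - 1 = 2 * (k + 1) := by omega
        rw [this]; ring
      rw [a1, a2, Nat.mul_div_cancel_left _ (by norm_num : (0:ℕ) < 4),
        Nat.mul_div_cancel_left _ (by norm_num : (0:ℕ) < 4)]
      ring

/-- The length of the distinguished Kostant representative `w_un`.
In 0-indexed terms the permutation `σ` of `{0,…,n-1}` is given by `σ(j) = 2j`
when `2j < n` (i.e. the 1-indexed rule `σ(j) = 2j-1` for `j ≤ ⌈n/2⌉`) and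
`σ(j) = 2(n-1-j)+1` otherwise (the 1-indexed rule `σ(n+1-j) = 2j` for `j ≤ ⌊n/2⌋`);
equivalently `σ⁻¹` sends `1↦1, 2↦n, 3↦2, 4↦n-1, …`.  Its number of inversions is
`n(n-2)/4` for `n` even and `(n-1)²/4` for `n` odd. -/
theorem stmt_7 (n : ℕ) (hn : 2 ≤ n) (σ : Equiv.Perm (Fin n))
    (hσ : ∀ j : Fin n,
      ((σ j : ℕ) = if 2 * (j : ℕ) < n then 2 * (j : ℕ) else 2 * (n - 1 - (j : ℕ)) + 1)) :
    (Finset.univ.filter fun p : Fin n × Fin n => p.1 < p.2 ∧ σ p.2 < σ p.1).card =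
      if Even n then n * (n - 2) / 4 else (n - 1) ^ 2 / 4 := by
  have hfib : ∀ j : Fin n,
      (Finset.univ.filter fun i : Fin n => i < j ∧ σ j < σ i).card = 2 * (j : ℕ) - n := by
    intro j
    have hcong : (Finset.univ.filter fun i : Fin n => i < j ∧ σ j < σ i) =
        (Finset.univ.filter fun i : Fin n => n - (j : ℕ) ≤ (i : ℕ) ∧ (i : ℕ) < (j : ℕ)) := by
      apply Finset.filter_congr
      intro i _
      have hi := hσ i
      have hj := hσ j
      have hiv := i.isLt
      have hjv := j.isLt
      simp only [Fin.lt_def]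
      split_ifs at hi hj <;> omega
    rw [hcong]
    have hcard : (Finset.univ.filter fun i : Fin n =>
        n - (j : ℕ) ≤ (i : ℕ) ∧ (i : ℕ) < (j : ℕ)).card =
        (Finset.Ico (n - (j : ℕ)) (j : ℕ)).card := by
      apply Finset.card_bij (fun (i : Fin n) _ => (i : ℕ))
      · intro a ha
        simp only [Finset.mem_filter, Finset.mem_univ, true_and] at ha
        simp only [Finset.mem_Ico]
        exact ha
      · intro a _ b _ h
        exact Fin.ext h
      · intro b hb
        simp only [Finset.mem_Ico] at hb
        have hbn : b < n := lt_of_lt_of_le hb.2 (le_of_lt j.isLt)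
        exact ⟨⟨b, hbn⟩, by simp only [Finset.mem_filter, Finset.mem_univ, true_and]; exact hb, rfl⟩
    rw [hcard, Nat.card_Ico]
    omega
  have hA : (Finset.univ.filter fun p : Fin n × Fin n => p.1 < p.2 ∧ σ p.2 < σ p.1).card =
      ∑ j : Fin n, (Finset.univ.filter fun i : Fin n => i < j ∧ σ j < σ i).card := by
    rw [Finset.card_eq_sum_card_fiberwise
      (f := fun p : Fin n × Fin n => p.2) (t := Finset.univ) (fun x _ => Finset.mem_univ _)]
    refine Finset.sum_congr rfl fun j _ => ?_
    apply Finset.card_bij (fun (p : Fin n × Fin n) _ => p.1)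
    · intro p hp
      simp only [Finset.mem_filter, Finset.mem_univ, true_and] at hp ⊢
      obtain ⟨⟨h1, h2⟩, h3⟩ := hp
      subst h3
      exact ⟨h1, h2⟩
    · intro p hp q hq h
      simp only [Finset.mem_filter] at hp hq
      exact Prod.ext h (hp.2.trans hq.2.symm)
    · intro i hi
      simp only [Finset.mem_filter, Finset.mem_univ, true_and] at hi
      refine ⟨(i, j), ?_, rfl⟩
      simp only [Finset.mem_filter, Finset.mem_univ, true_and]
      exact ⟨hi, trivial⟩
  rw [hA]
  simp only [hfib]
  rw [Fin.sum_univ_eq_sum_range (fun j => 2 * j - n) n]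
  exact stmt_7_gsum n
end

section
/- Let A = ℤ[x₁₁, x₁₂, x₂₁, x₂₂], let D = x₁₁x₂₂ - x₁₂x₂₁, and let R be the localization of A away from D. Let β : R → R[t₁, t₁⁻¹, t₂, t₂⁻¹, u] be the ℤ-algebra homomorphism induced by the substitution x₁₁ ↦ t₁x₁₁ + u x₂₁, x₁₂ ↦ t₁x₁₂ + u x₂₂, x₂₁ ↦ t₂x₂₁, x₂₂ ↦ t₂x₂₂ (i.e. replacing the matrix X by bX with b = [[t₁,u],[0,t₂]]). If p, q are integers with p > q, then the only f ∈ R satisfying β(f) = t₁^p t₂^q f is f = 0. -/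
/-!
Write `n⁻(z) = !![1, 0; z, 1]`, `w = !![0, -1; 1, 0]`, `n(s) = !![1, s; 0, 1]` and `g` for
the generic matrix. Over `R[z, z⁻¹]` one has the Bruhat decomposition
`n⁻(z) = b(z) w n(z⁻¹)` with `b(z) = !![z⁻¹, 1; 0, z]`, so the relation
`β f = t₁^p t₂^q f` specialises to `f(n⁻(z) g) = z^(q-p) f(w n(z⁻¹) g)`. The left side is a
polynomial in `z`, the right side is `z^(q-p)` times a polynomial in `z⁻¹`; as `q - p < 0`
both vanish, and `z = 0` gives `f = 0`.
-/

open MvPolynomial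

noncomputable section

/-- `A = ℤ[x₁₁,x₁₂,x₂₁,x₂₂]`, with the variable `(i,j)` standing for `x_{i+1,j+1}`. -/
abbrev A : Type := MvPolynomial (Fin 2 × Fin 2) ℤ

/-- The coordinate `x_{i+1,j+1}`. -/
def Xv (i j : Fin 2) : A := X (i, j)

/-- The determinant `D = x₁₁x₂₂ - x₁₂x₂₁`. -/
def Dpoly : A := Xv 0 0 * Xv 1 1 - Xv 0 1 * Xv 1 0

/-- `R = A[1/D]`, the affine algebra of `GL₂/ℤ`. -/
abbrev R : Type := Localization.Away Dpoly

/-- `S = R[t₁,t₁⁻¹,t₂,t₂⁻¹,u]`, realized as `R[t₁,t₂,u]` localized away from `t₁t₂`;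
here `t₁ = X 0`, `t₂ = X 1`, `u = X 2`. -/
abbrev S : Type := Localization.Away ((X 0 * X 1 : MvPolynomial (Fin 3) R))

/-- The image of the coordinate `x_{i+1,j+1}` in `S`. -/
def xS (i j : Fin 2) : S := algebraMap R S (algebraMap A R (Xv i j))

/-- The element `t₁` of `S`. -/
def t1 : S := algebraMap (MvPolynomial (Fin 3) R) S (X 0)

/-- The element `t₂` of `S`. -/
def t2 : S := algebraMap (MvPolynomial (Fin 3) R) S (X 1)

/-- The element `u` of `S`. -/
def uS : S := algebraMap (MvPolynomial (Fin 3) R) S (X 2)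

/-- The substitution `X ↦ bX` with `b = [[t₁,u],[0,t₂]]` on the level of coordinates:
`x₁₁ ↦ t₁x₁₁ + u x₂₁`, `x₁₂ ↦ t₁x₁₂ + u x₂₂`, `x₂₁ ↦ t₂x₂₁`, `x₂₂ ↦ t₂x₂₂`. -/
def substVal (v : Fin 2 × Fin 2) : S :=
  if v = (0, 0) then t1 * xS 0 0 + uS * xS 1 0
  else if v = (0, 1) then t1 * xS 0 1 + uS * xS 1 1
  else if v = (1, 0) then t2 * xS 1 0
  else t2 * xS 1 1

open scoped Polynomial LaurentPolynomial
open LaurentPolynomial (T invert trunc)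

namespace LaurentPolynomial

variable {K : Type*}

lemma trunc_T_mul_invert_toLaurent [CommSemiring K] {n : ℤ} (hn : n < 0) (Q : K[X]) :
    trunc (T n * invert (Polynomial.toLaurent Q)) = 0 := by
  induction Q using Polynomial.induction_on' with
  | add P Q hP hQ => rw [map_add, map_add, mul_add, map_add, hP, hQ, add_zero]
  | monomial k a =>
    rw [Polynomial.toLaurent_C_mul_T, map_mul (invert (R := K)), invert_C, invert_T,
      mul_left_comm, ← T_add, trunc_C_mul_T, if_neg (by omega)]

lemma eq_zero_of_toLaurent_eq_T_mul_invert [CommSemiring K] {n : ℤ} (hn : n < 0) {P Q : K[X]}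
    (h : Polynomial.toLaurent P = T n * invert (Polynomial.toLaurent Q)) : P = 0 := by
  rw [← Polynomial.trunc_toLaurent P, h, trunc_T_mul_invert_toLaurent hn]

lemma val_zpow_of_val_eq_T [Semiring K] {U : K[T;T⁻¹]ˣ} {m : ℤ} (hU : (U : K[T;T⁻¹]) = T m)
    (n : ℤ) :
    ((U ^ n : K[T;T⁻¹]ˣ) : K[T;T⁻¹]) = T (n * m) := by
  have hU_inv : ((U⁻¹ : K[T;T⁻¹]ˣ) : K[T;T⁻¹]) = T (-m) :=
    Units.inv_eq_of_mul_eq_one_right (by rw [hU, ← T_add, add_neg_cancel, T_zero])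
  induction n using Int.induction_on with
  | zero => simp [T_zero]
  | succ k ih => rw [zpow_add_one, Units.val_mul, ih, hU, ← T_add]; congr 1; ring
  | pred k ih => rw [zpow_sub_one, Units.val_mul, ih, hU_inv, ← T_add]; congr 1; ring

end LaurentPolynomial

def genericMatrix : Matrix (Fin 2) (Fin 2) R := Matrix.of fun i j => algebraMap A R (Xv i j)

lemma isUnit_det_genericMatrix : IsUnit genericMatrix.det := by
  have : genericMatrix.det = algebraMap A R Dpoly := by
    rw [Matrix.det_fin_two]; simp [genericMatrix, Dpoly]
  exact this ▸ IsLocalization.Away.algebraMap_isUnit Dpoly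

section PointEvaluation

variable {B : Type*} [CommRing B]

lemma aeval_Dpoly (M : Matrix (Fin 2) (Fin 2) B) :
    aeval (fun v : Fin 2 × Fin 2 => M v.1 v.2) Dpoly = M.det := by
  simp [Dpoly, Xv, Matrix.det_fin_two]

def evalAt (M : Matrix (Fin 2) (Fin 2) B) (hM : IsUnit M.det) : R →+* B :=
  Localization.awayLift (aeval fun v : Fin 2 × Fin 2 => M v.1 v.2).toRingHom Dpoly
    (by simpa [aeval_Dpoly] using hM)

lemma evalAt_algebraMap_Xv (M : Matrix (Fin 2) (Fin 2) B) (hM : IsUnit M.det) (i j : Fin 2) :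
    evalAt M hM (algebraMap A R (Xv i j)) = M i j := by
  rw [evalAt, Localization.awayLift, IsLocalization.Away.lift_eq]
  simp [Xv]

lemma R.ringHom_ext {φ ψ : R →+* B}
    (h : ∀ i j, φ (algebraMap A R (Xv i j)) = ψ (algebraMap A R (Xv i j))) : φ = ψ := by
  refine IsLocalization.ringHom_ext (Submonoid.powers Dpoly) (MvPolynomial.ringHom_ext ?_ ?_)
  · exact fun n => by simp
  · rintro ⟨i, j⟩
    exact h i j

lemma isUnit_det_mul_genericMatrix_map {N : Matrix (Fin 2) (Fin 2) B}
    (hN : N.det = 1) (φ : R →+* B) : IsUnit (N * genericMatrix.map φ).det := by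
  simpa [Matrix.det_mul, hN, RingHom.map_det] using isUnit_det_genericMatrix.map φ

end PointEvaluation

def lowerUnipotentPoint : Matrix (Fin 2) (Fin 2) R[X] :=
  !![1, 0; Polynomial.X, 1] * genericMatrix.map Polynomial.C

def weylUnipotentPoint : Matrix (Fin 2) (Fin 2) R[X] :=
  !![0, -1; 1, Polynomial.X] * genericMatrix.map Polynomial.C

def lowerUnipotentTranslate : R →+* R[X] :=
  evalAt lowerUnipotentPoint
    (isUnit_det_mul_genericMatrix_map (by simp [Matrix.det_fin_two_of]) _)

def weylUnipotentTranslate : R →+* R[X] :=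
  evalAt weylUnipotentPoint
    (isUnit_det_mul_genericMatrix_map (by simp [Matrix.det_fin_two_of]) _)

lemma lowerUnipotentTranslate_algebraMap_Xv (i j : Fin 2) :
    lowerUnipotentTranslate (algebraMap A R (Xv i j)) = lowerUnipotentPoint i j :=
  evalAt_algebraMap_Xv ..

lemma weylUnipotentTranslate_algebraMap_Xv (i j : Fin 2) :
    weylUnipotentTranslate (algebraMap A R (Xv i j)) = weylUnipotentPoint i j :=
  evalAt_algebraMap_Xv ..

lemma eval_zero_lowerUnipotentTranslate (f : R) :
    (lowerUnipotentTranslate f).eval 0 = f := by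
  suffices (Polynomial.evalRingHom 0).comp lowerUnipotentTranslate = RingHom.id R from
    RingHom.congr_fun this f
  refine R.ringHom_ext fun i j => ?_
  fin_cases i <;> fin_cases j <;>
    simp [lowerUnipotentTranslate_algebraMap_Xv, lowerUnipotentPoint, genericMatrix,
      Matrix.mul_apply, Fin.sum_univ_two]

def weylLaurent : R →+* R[T;T⁻¹] :=
  (invert : R[T;T⁻¹] ≃ₐ[R] R[T;T⁻¹]).toRingHom.comp
    (Polynomial.toLaurent.comp weylUnipotentTranslate)

/-- `t₁ ↦ z⁻¹`, `t₂ ↦ z`, `u ↦ 1` and `g ↦ w n(z⁻¹) g`, so that `bX ↦ n⁻(z) g`. -/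
def bruhatEval : S →+* R[T;T⁻¹] :=
  Localization.awayLift (eval₂Hom weylLaurent ![T (-1), T 1, 1]) _ (by
    rw [map_mul, eval₂Hom_X', eval₂Hom_X']
    exact LaurentPolynomial.isUnit_T (-1) |>.mul (LaurentPolynomial.isUnit_T 1))

lemma bruhatEval_algebraMap (f : R) : bruhatEval (algebraMap R S f) = weylLaurent f := by
  rw [IsScalarTower.algebraMap_apply R (MvPolynomial (Fin 3) R) S f, bruhatEval,
    Localization.awayLift, IsLocalization.Away.lift_eq]
  simp

lemma bruhatEval_algebraMap_X (k : Fin 3) :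
    bruhatEval (algebraMap (MvPolynomial (Fin 3) R) S (X k)) = ![T (-1), T 1, 1] k := by
  rw [bruhatEval, Localization.awayLift, IsLocalization.Away.lift_eq, eval₂Hom_X']

lemma bruhatEval_xS (i j : Fin 2) :
    bruhatEval (xS i j) = invert (Polynomial.toLaurent (weylUnipotentPoint i j)) := by
  rw [xS, bruhatEval_algebraMap, weylLaurent]
  simp [weylUnipotentTranslate_algebraMap_Xv]

lemma bruhatEval_comp_eq (β : R →+* S)
    (hβ : ∀ a : A, β (algebraMap A R a) = aeval substVal a) :
    bruhatEval.comp β = Polynomial.toLaurent.comp lowerUnipotentTranslate := by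
  refine R.ringHom_ext fun i j => ?_
  rw [RingHom.comp_apply, RingHom.comp_apply, hβ, lowerUnipotentTranslate_algebraMap_Xv, Xv,
    aeval_X]
  have hT : (T (-1) * T 1 : R[T;T⁻¹]) = 1 := by rw [← LaurentPolynomial.T_add]; rfl
  fin_cases i <;> fin_cases j <;>
    simp [substVal, t1, t2, uS, bruhatEval_algebraMap_X, bruhatEval_xS, lowerUnipotentPoint,
      weylUnipotentPoint, genericMatrix, Matrix.mul_apply, Fin.sum_univ_two]
  · ring
  · ring
  · linear_combination LaurentPolynomial.C (algebraMap A R (Xv 1 0)) * hT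
  · linear_combination LaurentPolynomial.C (algebraMap A R (Xv 1 1)) * hT

lemma bruhatEval_val_zpow_mul_zpow {u1 u2 : Sˣ} (hu1 : (u1 : S) = t1) (hu2 : (u2 : S) = t2)
    (p q : ℤ) : bruhatEval ((u1 ^ p * u2 ^ q : Sˣ) : S) = T (q - p) := by
  have h1 : ((Units.map bruhatEval.toMonoidHom u1 : R[T;T⁻¹]ˣ) : R[T;T⁻¹]) = T (-1) := by
    simp [hu1, t1, bruhatEval_algebraMap_X]
  have h2 : ((Units.map bruhatEval.toMonoidHom u2 : R[T;T⁻¹]ˣ) : R[T;T⁻¹]) = T 1 := by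
    simp [hu2, t2, bruhatEval_algebraMap_X]
  change ((Units.map bruhatEval.toMonoidHom (u1 ^ p * u2 ^ q) : R[T;T⁻¹]ˣ) : R[T;T⁻¹]) = _
  rw [map_mul, map_zpow, map_zpow, Units.val_mul,
    LaurentPolynomial.val_zpow_of_val_eq_T h1, LaurentPolynomial.val_zpow_of_val_eq_T h2,
    ← LaurentPolynomial.T_add]
  congr 1
  ring

/-- If `p > q` then the only `f ∈ R` with `β(f) = t₁^p t₂^q f` is `f = 0`
(the module `A_λ(B\GL₂)` vanishes for dominant `λ` with `l > 0`). -/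
theorem stmt_8 (β : R →+* S)
    (hβ : ∀ a : A, β (algebraMap A R a) = aeval substVal a)
    (u1 u2 : Sˣ) (hu1 : (u1 : S) = t1) (hu2 : (u2 : S) = t2)
    (p q : ℤ) (hpq : q < p) (f : R)
    (hf : β f = ((u1 ^ p * u2 ^ q : Sˣ) : S) * algebraMap R S f) :
    f = 0 := by
  have hLaurent : Polynomial.toLaurent (lowerUnipotentTranslate f) =
      T (q - p) * invert (Polynomial.toLaurent (weylUnipotentTranslate f)) := by
    rw [← RingHom.comp_apply Polynomial.toLaurent, ← bruhatEval_comp_eq β hβ,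
      RingHom.comp_apply, hf, map_mul, bruhatEval_val_zpow_mul_zpow hu1 hu2, bruhatEval_algebraMap]
    rfl
  rw [← eval_zero_lowerUnipotentTranslate f,
    LaurentPolynomial.eq_zero_of_toLaurent_eq_T_mul_invert (by omega) hLaurent,
    Polynomial.eval_zero]
end
end
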